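/- arXiv:2304.06328 — 2 statements merged into one kernel-verified Lean document; each statement's English description precedes it below -/
import Mathlib

section
/- Let g : [0,T] → ℝ be continuous with g(0)=0, let X₀ > 0, a > 0, and 0 < ε₂ ≤ ε₁. If x₁ and x₂ are continuous functions on [0,T] satisfying xᵢ(t) = X₀ + a∫₀^t ds/(max(xᵢ(s),0)+εᵢ) + g(t) for i = 1,2, then x₂(t) ≥ x₁(t) for all t ∈ [0,T]. -/
open Set

theorem regularized_bessel_comparison_in_epsilon
    (T X₀ a ε₁ ε₂ : ℝ) (hT : 0 < T) (hX₀ : 0 < X₀) (ha : 0 < a)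
    (hε₂ : 0 < ε₂) (hε : ε₂ ≤ ε₁)
    (g : ℝ → ℝ) (hg : ContinuousOn g (Icc 0 T)) (hg0 : g 0 = 0)
    (x₁ x₂ : ℝ → ℝ)
    (hx₁c : ContinuousOn x₁ (Icc 0 T)) (hx₂c : ContinuousOn x₂ (Icc 0 T))
    (hx₁ : ∀ t ∈ Icc (0:ℝ) T,
      x₁ t = X₀ + a * (∫ s in (0:ℝ)..t, 1 / (max (x₁ s) 0 + ε₁)) + g t)
    (hx₂ : ∀ t ∈ Icc (0:ℝ) T,
      x₂ t = X₀ + a * (∫ s in (0:ℝ)..t, 1 / (max (x₂ s) 0 + ε₂)) + g t) :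
    ∀ t ∈ Icc (0:ℝ) T, x₁ t ≤ x₂ t := by
  intro t₀ ht₀
  by_contra hlt
  push_neg at hlt
  have hε₁ : 0 < ε₁ := lt_of_lt_of_le hε₂ hε
  set f₁ : ℝ → ℝ := fun s => 1 / (max (x₁ s) 0 + ε₁) with hf₁def
  set f₂ : ℝ → ℝ := fun s => 1 / (max (x₂ s) 0 + ε₂) with hf₂def
  have hden₁ : ∀ s, 0 < max (x₁ s) 0 + ε₁ := fun s => by positivity
  have hden₂ : ∀ s, 0 < max (x₂ s) 0 + ε₂ := fun s => by positivity
  have hm₁ : ContinuousOn (fun s => max (x₁ s) 0) (Icc 0 T) :=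
    fun u hu => (hx₁c u hu).max continuousWithinAt_const
  have hm₂ : ContinuousOn (fun s => max (x₂ s) 0) (Icc 0 T) :=
    fun u hu => (hx₂c u hu).max continuousWithinAt_const
  have hf₁c : ContinuousOn f₁ (Icc 0 T) :=
    ContinuousOn.div continuousOn_const (hm₁.add continuousOn_const)
      (fun s _ => (hden₁ s).ne')
  have hf₂c : ContinuousOn f₂ (Icc 0 T) :=
    ContinuousOn.div continuousOn_const (hm₂.add continuousOn_const)
      (fun s _ => (hden₂ s).ne')
  have hmono : ∀ s, x₂ s ≤ x₁ s → f₁ s ≤ f₂ s := by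
    intro s hs
    have h1 : max (x₂ s) 0 ≤ max (x₁ s) 0 := max_le_max hs le_rfl
    apply one_div_le_one_div_of_le (hden₂ s)
    linarith
  have hd0 : x₁ 0 ≤ x₂ 0 := by
    have h1 := hx₁ 0 ⟨le_rfl, hT.le⟩
    have h2 := hx₂ 0 ⟨le_rfl, hT.le⟩
    simp only [intervalIntegral.integral_same, hg0, mul_zero, add_zero] at h1 h2
    rw [h1, h2]
  set S := {t : ℝ | t ∈ Icc 0 t₀ ∧ x₁ t ≤ x₂ t} with hSdef
  have hS0 : (0:ℝ) ∈ S := ⟨⟨le_rfl, ht₀.1⟩, hd0⟩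
  have hSbdd : BddAbove S := ⟨t₀, fun s hs => hs.1.2⟩
  have hSsub : S ⊆ Icc 0 T := fun s hs => ⟨hs.1.1, le_trans hs.1.2 ht₀.2⟩
  have hSclosed : IsClosed S := by
    have : S = Icc 0 t₀ ∩ (fun t => x₂ t - x₁ t) ⁻¹' (Ici 0) := by
      ext t
      simp only [hSdef, mem_setOf_eq, mem_inter_iff, mem_preimage, mem_Ici, sub_nonneg]
    rw [this]
    exact ContinuousOn.preimage_isClosed_of_isClosed
      ((hx₂c.mono (Icc_subset_Icc le_rfl ht₀.2)).sub
        (hx₁c.mono (Icc_subset_Icc le_rfl ht₀.2)))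
      isClosed_Icc isClosed_Ici
  set c := sSup S with hc
  have hcS : c ∈ S := hSclosed.csSup_mem ⟨0, hS0⟩ hSbdd
  have hcT : c ∈ Icc (0:ℝ) T := hSsub hcS
  have hct₀ : c < t₀ := lt_of_le_of_ne hcS.1.2 (by
    intro h; exact absurd hcS.2 (by rw [h]; exact not_le.mpr hlt))
  -- on (c, t₀], x₂ < x₁
  have hIoc : ∀ s ∈ Ioc c t₀, x₂ s < x₁ s := by
    intro s hs
    by_contra h
    push_neg at h
    have : s ∈ S := ⟨⟨le_trans hcT.1 hs.1.le, hs.2⟩, h⟩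
    exact absurd (le_csSup hSbdd this) (not_le.mpr hs.1)
  have hcle : x₂ c ≤ x₁ c := by
    by_contra hcon
    push_neg at hcon
    have hdc : ContinuousWithinAt (fun t => x₂ t - x₁ t) (Icc 0 T) c :=
      ((hx₂c.sub hx₁c)) c (hSsub hcS)
    have hev : ∀ᶠ u in nhdsWithin c (Icc 0 T), 0 < x₂ u - x₁ u := by
      have := hdc.eventually (p := fun y => 0 < y) (IsOpen.eventually_mem isOpen_Ioi (by
        exact sub_pos.mpr hcon))
      simpa using this
    have hsubIoc : Ioc c t₀ ⊆ Icc 0 T := fun u hu =>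
      ⟨le_trans hcT.1 hu.1.le, le_trans hu.2 ht₀.2⟩
    have hne : (nhdsWithin c (Ioc c t₀)).NeBot := by
      apply mem_closure_iff_nhdsWithin_neBot.mp
      rw [closure_Ioc (ne_of_lt hct₀)]
      exact ⟨le_rfl, hct₀.le⟩
    have hev' : ∀ᶠ u in nhdsWithin c (Ioc c t₀), 0 < x₂ u - x₁ u :=
      Filter.Eventually.filter_mono (nhdsWithin_mono c hsubIoc) hev
    obtain ⟨u, hu, huS⟩ := (hev'.and self_mem_nhdsWithin).exists
    exact absurd (sub_pos.mp hu).le (not_le.mpr (hIoc u huS))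
  have hIcc : ∀ s ∈ Icc c t₀, x₂ s ≤ x₁ s := by
    intro s hs
    rcases eq_or_lt_of_le hs.1 with h | h
    · rw [← h]; exact hcle
    · exact (hIoc s ⟨h, hs.2⟩).le
  have hsubcc : Icc c t₀ ⊆ Icc 0 T := fun u hu =>
    ⟨le_trans hcT.1 hu.1, le_trans hu.2 ht₀.2⟩
  have hInt₁ : IntervalIntegrable f₁ MeasureTheory.volume c t₀ :=
    (hf₁c.mono (by rwa [uIcc_of_le hct₀.le])).intervalIntegrable
  have hInt₂ : IntervalIntegrable f₂ MeasureTheory.volume c t₀ :=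
    (hf₂c.mono (by rwa [uIcc_of_le hct₀.le])).intervalIntegrable
  have hInt₁0 : IntervalIntegrable f₁ MeasureTheory.volume 0 c :=
    (hf₁c.mono (by rw [uIcc_of_le hcT.1]; exact Icc_subset_Icc le_rfl hcT.2)).intervalIntegrable
  have hInt₂0 : IntervalIntegrable f₂ MeasureTheory.volume 0 c :=
    (hf₂c.mono (by rw [uIcc_of_le hcT.1]; exact Icc_subset_Icc le_rfl hcT.2)).intervalIntegrable
  have hmonoInt : (∫ s in c..t₀, f₁ s) ≤ ∫ s in c..t₀, f₂ s :=
    intervalIntegral.integral_mono_on hct₀.le hInt₁ hInt₂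
      (fun s hs => hmono s (hIcc s hs))
  have hsplit₁ : (∫ s in (0:ℝ)..t₀, f₁ s) = (∫ s in (0:ℝ)..c, f₁ s) + ∫ s in c..t₀, f₁ s :=
    (intervalIntegral.integral_add_adjacent_intervals hInt₁0 hInt₁).symm
  have hsplit₂ : (∫ s in (0:ℝ)..t₀, f₂ s) = (∫ s in (0:ℝ)..c, f₂ s) + ∫ s in c..t₀, f₂ s :=
    (intervalIntegral.integral_add_adjacent_intervals hInt₂0 hInt₂).symm
  have e₁ := hx₁ t₀ ht₀
  have e₂ := hx₂ t₀ ht₀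
  have e₁c := hx₁ c hcT
  have e₂c := hx₂ c hcT
  have hgain : 0 ≤ a * ((∫ s in c..t₀, f₂ s) - ∫ s in c..t₀, f₁ s) :=
    mul_nonneg ha.le (sub_nonneg.mpr hmonoInt)
  have hdc : x₁ c ≤ x₂ c := hcS.2
  rw [hsplit₁] at e₁
  rw [hsplit₂] at e₂
  nlinarith [hlt, hdc, hgain, e₁, e₂, e₁c, e₂c]
end

section
/- Let g : [0,∞) → ℝ be continuous with g(0) = 0, X₀ > 0, ε > 0, and for each a > 0 let x_a be the unique continuous solution of x_a(t) = X₀ + a∫₀^t ds/(max(x_a(s),0)+ε) + g(t). Then for 0 < a₂ ≤ a₁ one has x_{a₂}(t) ≤ x_{a₁}(t) for all t ≥ 0; consequently for each fixed t the map a ↦ x_a(t) is nondecreasing and lim_{a↓0} x_a(t) exists, being a monotone limit bounded below by X₀ + g(t). -/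
open Set Filter

theorem monotone_in_drift_and_limit
    (X₀ ε : ℝ) (hX₀ : 0 < X₀) (hε : 0 < ε)
    (g : ℝ → ℝ) (hg : Continuous g) (hg0 : g 0 = 0)
    (x : ℝ → ℝ → ℝ)
    (hxc : ∀ a : ℝ, 0 < a → ContinuousOn (x a) (Ici 0))
    (hx : ∀ a : ℝ, 0 < a → ∀ t, 0 ≤ t →
      x a t = X₀ + a * (∫ s in (0:ℝ)..t, (max (x a s) 0 + ε)⁻¹) + g t) :
    (∀ a₁ a₂ : ℝ, 0 < a₂ → a₂ ≤ a₁ → ∀ t, 0 ≤ t → x a₂ t ≤ x a₁ t) ∧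
    (∀ t, 0 ≤ t → ∃ l : ℝ,
      Tendsto (fun a => x a t) (nhdsWithin 0 (Ioi 0)) (nhds l) ∧
      X₀ + g t ≤ l) := by
  set F : ℝ → ℝ := fun y => (max y 0 + ε)⁻¹ with hF
  have hFpos : ∀ y, 0 < F y := fun y => by
    have : 0 < max y 0 + ε := by positivity
    exact inv_pos.mpr this
  have hFanti : ∀ y z : ℝ, y ≤ z → F z ≤ F y := by
    intro y z hyz
    have h1 : 0 < max y 0 + ε := by positivity
    exact inv_anti₀ h1 (by gcongr)
  have hFcont : Continuous F := by
    apply Continuous.inv₀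
    · exact (continuous_id.max continuous_const).add continuous_const
    · intro y; positivity
  -- integrability
  have hint : ∀ a : ℝ, 0 < a → ∀ u v : ℝ, 0 ≤ u → 0 ≤ v →
      IntervalIntegrable (fun s => F (x a s)) MeasureTheory.volume u v := by
    intro a ha u v hu hv
    apply ContinuousOn.intervalIntegrable
    apply hFcont.comp_continuousOn
    apply (hxc a ha).mono
    intro s hs
    rcases le_total u v with h | h
    · rw [uIcc_of_le h] at hs; exact le_trans hu hs.1
    · rw [uIcc_of_ge h] at hs; exact le_trans hv hs.1
  have hx0 : ∀ a : ℝ, 0 < a → x a 0 = X₀ := by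
    intro a ha
    rw [hx a ha 0 le_rfl, intervalIntegral.integral_same, hg0]; ring
  -- increment identity
  have hincr : ∀ a : ℝ, 0 < a → ∀ u v : ℝ, 0 ≤ u → 0 ≤ v →
      x a v - x a u = a * (∫ s in u..v, F (x a s)) + (g v - g u) := by
    intro a ha u v hu hv
    rw [hx a ha u hu, hx a ha v hv]
    have := intervalIntegral.integral_interval_sub_left
      (hint a ha 0 v le_rfl hv) (hint a ha 0 u le_rfl hu)
    have h2 : (∫ s in (0:ℝ)..v, F (x a s)) - ∫ s in (0:ℝ)..u, F (x a s)
        = ∫ s in u..v, F (x a s) := this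
    nlinarith [h2]
  -- comparison
  have comp : ∀ a₁ a₂ : ℝ, 0 < a₂ → a₂ ≤ a₁ → ∀ t, 0 ≤ t → x a₂ t ≤ x a₁ t := by
    intro a₁ a₂ ha₂ hle t ht
    have ha₁ : 0 < a₁ := lt_of_lt_of_le ha₂ hle
    by_contra hcon
    push_neg at hcon
    set D : ℝ → ℝ := fun s => x a₂ s - x a₁ s with hD
    have hDt : 0 < D t := sub_pos.mpr hcon
    have hDcont : ContinuousOn D (Ici 0) := (hxc a₂ ha₂).sub (hxc a₁ ha₁)
    have hD0 : D 0 = 0 := by simp [hD, hx0 a₁ ha₁, hx0 a₂ ha₂]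
    have htpos : 0 < t := by
      rcases ht.lt_or_eq with h | h
      · exact h
      · exfalso; rw [← h] at hDt; rw [hD0] at hDt; exact lt_irrefl 0 hDt
    set S : Set ℝ := {s | s ∈ Icc 0 t ∧ D s ≤ 0} with hS
    have hScl : IsClosed S := by
      have : S = Icc 0 t ∩ D ⁻¹' (Iic 0) := rfl
      rw [this]
      exact ContinuousOn.preimage_isClosed_of_isClosed
        (hDcont.mono (fun s hs => hs.1)) isClosed_Icc isClosed_Iic
    have hScpt : IsCompact S := (isCompact_Icc).of_isClosed_subset hScl (fun s hs => hs.1)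
    have hSne : S.Nonempty := ⟨0, ⟨le_rfl, ht⟩, le_of_eq hD0⟩
    set τ := sSup S with hτ
    have hτS : τ ∈ S := hScpt.sSup_mem hSne
    have hτmem : τ ∈ Icc 0 t := hτS.1
    have hτle : D τ ≤ 0 := hτS.2
    have hτlt : τ < t := lt_of_le_of_ne hτmem.2 (by intro h; rw [h] at hτle; linarith)
    have hpos : ∀ s ∈ Ioc τ t, 0 < D s := by
      intro s hs
      by_contra hns
      push_neg at hns
      have : s ∈ S := ⟨⟨le_trans hτmem.1 hs.1.le, hs.2⟩, hns⟩
      exact absurd (le_csSup hScpt.bddAbove this) (not_le.mpr hs.1)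
    -- D τ = 0
    have hτ0 : D τ = 0 := by
      refine le_antisymm hτle ?_
      have hcw : ContinuousWithinAt D (Ici 0) τ := hDcont τ (mem_Ici.mpr hτmem.1)
      have hsub : Ioc τ t ⊆ Ici 0 := fun s hs => le_trans hτmem.1 hs.1.le
      have htend : Tendsto D (nhdsWithin τ (Ioc τ t)) (nhds (D τ)) := hcw.mono hsub
      have hne : (nhdsWithin τ (Ioc τ t)).NeBot := by
        rw [nhdsWithin_Ioc_eq_nhdsGT hτlt]; infer_instance
      exact ge_of_tendsto htend (eventually_mem_nhdsWithin.mono (fun s hs => (hpos s hs).le))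
    -- estimate
    have h1 : x a₂ t - x a₂ τ = a₂ * (∫ s in τ..t, F (x a₂ s)) + (g t - g τ) :=
      hincr a₂ ha₂ τ t hτmem.1 ht
    have h2 : x a₁ t - x a₁ τ = a₁ * (∫ s in τ..t, F (x a₁ s)) + (g t - g τ) :=
      hincr a₁ ha₁ τ t hτmem.1 ht
    have hmono : (∫ s in τ..t, F (x a₂ s)) ≤ ∫ s in τ..t, F (x a₁ s) := by
      apply intervalIntegral.integral_mono_on hτlt.le
        (hint a₂ ha₂ τ t hτmem.1 ht) (hint a₁ ha₁ τ t hτmem.1 ht)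
      intro s hs
      apply hFanti
      have h0 : x a₂ τ - x a₁ τ = 0 := hτ0
      rcases eq_or_lt_of_le hs.1 with h | h
      · rw [← h]; linarith
      · have hp : 0 < x a₂ s - x a₁ s := hpos s ⟨h, hs.2⟩
        linarith
    have hnn : 0 ≤ ∫ s in τ..t, F (x a₁ s) := by
      apply intervalIntegral.integral_nonneg hτlt.le
      intro s _; exact (hFpos _).le
    have hDτ : x a₂ τ - x a₁ τ = 0 := hτ0
    have hDt' : 0 < x a₂ t - x a₁ t := hDt
    have hkey : a₂ * (∫ s in τ..t, F (x a₂ s)) ≤ a₁ * (∫ s in τ..t, F (x a₁ s)) :=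
      le_trans (by nlinarith) (by nlinarith)
    linarith
  refine ⟨comp, ?_⟩
  intro t ht
  have hmono : MonotoneOn (fun a => x a t) (Ioi 0) := by
    intro a hA b hb hab
    exact comp b a hA hab t ht
  have hlb : ∀ a ∈ Ioi (0:ℝ), X₀ + g t ≤ x a t := by
    intro a ha
    rw [hx a ha t ht]
    have : 0 ≤ ∫ s in (0:ℝ)..t, F (x a s) :=
      intervalIntegral.integral_nonneg ht (fun s _ => (hFpos _).le)
    nlinarith [ha.out]
  have hbdd : BddBelow ((fun a => x a t) '' Ioi 0) := by
    refine ⟨X₀ + g t, ?_⟩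
    rintro y ⟨a, ha, rfl⟩
    exact hlb a ha
  refine ⟨sInf ((fun a => x a t) '' Ioi 0),
    hmono.tendsto_nhdsGT hbdd, ?_⟩
  apply le_csInf (Set.Nonempty.image _ ⟨1, by norm_num⟩)
  rintro y ⟨a, ha, rfl⟩
  exact hlb a ha
end
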